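/- arXiv:2104.08143 — 5 statements merged into one kernel-verified Lean document; each statement's English description precedes it below -/
import Mathlib

section
/- Let X, Y be Hilbert spaces, B ∈ Lis(X, Y'), γ₀ ∈ L(X, H) for a Hilbert space H, with [B; γ₀] ∈ Lis(X, Y' × H). Given g ∈ Y' and u₀ ∈ H, the solution u of the minimization problem u = argmin_{w ∈ X} ‖Bw − g‖²_{Y'} + ‖γ₀w − u₀‖²_H exists, is unique, and satisfies the Euler–Lagrange (normal) equation (B'R_Y⁻¹B + γ₀'γ₀)u = B'R_Y⁻¹g + γ₀'u₀, where R_Y : Y → Y' is the Riesz isomorphism. -/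
/-!
Since `x ↦ (B x, γ₀ x)` is onto, the functional attains the value `0` at
`u = [B; γ₀]⁻¹ (g, u₀)`. Its minimizers are therefore exactly the exact solutions of
`B u = g`, `γ₀ u = u₀`, which are unique by injectivity, and for these both sides of the
normal equations coincide term by term.
-/

open RealInnerProductSpace

theorem isMinOn_sum_sq_residual_iff {X F G : Type*} [NormedAddCommGroup F]
    [NormedAddCommGroup G] {A : X → F} {C : X → G} {a : F} {c : G} {v : X}
    (hA : A v = a) (hC : C v = c) {u : X} :
    IsMinOn (fun w => ‖A w - a‖ ^ 2 + ‖C w - c‖ ^ 2) Set.univ u ↔ A u = a ∧ C u = c := by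
  constructor
  · intro hu
    have hle : ‖A u - a‖ ^ 2 + ‖C u - c‖ ^ 2 ≤ 0 := by
      simpa [hA, hC] using isMinOn_univ_iff.mp hu v
    have h0 := le_antisymm hle (by positivity)
    rw [add_eq_zero_iff_of_nonneg (sq_nonneg _) (sq_nonneg _)] at h0
    simpa only [sq_eq_zero_iff, norm_eq_zero, sub_eq_zero] using h0
  · rintro ⟨rfl, rfl⟩
    refine isMinOn_univ_iff.mpr fun w => ?_
    simp only [sub_self, norm_zero, zero_pow two_ne_zero, add_zero]
    positivity

theorem stmt0_general
    {X Y H : Type*}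
    [NormedAddCommGroup X] [InnerProductSpace ℝ X]
    [NormedAddCommGroup Y] [InnerProductSpace ℝ Y] [CompleteSpace Y]
    [NormedAddCommGroup H] [InnerProductSpace ℝ H]
    (B : X →L[ℝ] StrongDual ℝ Y) (γ₀ : X →L[ℝ] H)
    (hiso : ∃ E : X ≃L[ℝ] (StrongDual ℝ Y × H), ∀ x, E x = (B x, γ₀ x))
    (g : StrongDual ℝ Y) (u₀ : H) :
    (∃! u : X, IsMinOn (fun w => ‖B w - g‖ ^ 2 + ‖γ₀ w - u₀‖ ^ 2) Set.univ u) ∧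
    (∀ u : X, IsMinOn (fun w => ‖B w - g‖ ^ 2 + ‖γ₀ w - u₀‖ ^ 2) Set.univ u →
      ∀ w : X,
        ⟪(InnerProductSpace.toDual ℝ Y).symm (B u),
            (InnerProductSpace.toDual ℝ Y).symm (B w)⟫ + ⟪γ₀ u, γ₀ w⟫
          = ⟪(InnerProductSpace.toDual ℝ Y).symm g,
              (InnerProductSpace.toDual ℝ Y).symm (B w)⟫ + ⟪u₀, γ₀ w⟫) := by
  obtain ⟨E, hE⟩ := hiso
  have hsolve : ∀ u, B u = g ∧ γ₀ u = u₀ ↔ u = E.symm (g, u₀) := fun u => by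
    rw [E.eq_symm_apply, hE, Prod.mk.injEq]
  obtain ⟨hBv, hγv⟩ := (hsolve _).mpr rfl
  have hmin : ∀ u, IsMinOn (fun w => ‖B w - g‖ ^ 2 + ‖γ₀ w - u₀‖ ^ 2) Set.univ u ↔
      B u = g ∧ γ₀ u = u₀ := fun u => isMinOn_sum_sq_residual_iff hBv hγv
  refine ⟨⟨E.symm (g, u₀), (hmin _).mpr ((hsolve _).mpr rfl),
    fun u hu => (hsolve u).mp ((hmin u).mp hu)⟩, fun u hu w => ?_⟩
  obtain ⟨hBu, hγu⟩ := (hmin u).mp hu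
  rw [hBu, hγu]

/-- well-posedness of the least-squares minimization problem and its
Euler–Lagrange (normal) equations, with the Riesz isomorphism `R_Y`. -/
theorem stmt0
    {X Y H : Type*}
    [NormedAddCommGroup X] [InnerProductSpace ℝ X] [CompleteSpace X]
    [NormedAddCommGroup Y] [InnerProductSpace ℝ Y] [CompleteSpace Y]
    [NormedAddCommGroup H] [InnerProductSpace ℝ H] [CompleteSpace H]
    (B : X →L[ℝ] StrongDual ℝ Y) (γ₀ : X →L[ℝ] H)
    (hiso : ∃ E : X ≃L[ℝ] (StrongDual ℝ Y × H), ∀ x, E x = (B x, γ₀ x))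
    (g : StrongDual ℝ Y) (u₀ : H) :
    (∃! u : X, IsMinOn (fun w => ‖B w - g‖ ^ 2 + ‖γ₀ w - u₀‖ ^ 2) Set.univ u) ∧
    (∀ u : X, IsMinOn (fun w => ‖B w - g‖ ^ 2 + ‖γ₀ w - u₀‖ ^ 2) Set.univ u →
      ∀ w : X,
        ⟪(InnerProductSpace.toDual ℝ Y).symm (B u),
            (InnerProductSpace.toDual ℝ Y).symm (B w)⟫ + ⟪γ₀ u, γ₀ w⟫
          = ⟪(InnerProductSpace.toDual ℝ Y).symm g,
              (InnerProductSpace.toDual ℝ Y).symm (B w)⟫ + ⟪u₀, γ₀ w⟫) :=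
  stmt0_general B γ₀ hiso g u₀
end

section
/- Suppose real numbers satisfy: ‖r − r̂‖ ≤ C₁·β, β ≤ ξ/(1−ξ)·‖r̂‖ with 0 < ξ < 1, c·E ≤ ‖r‖ ≤ C·E where E = ‖u − u_δ‖, and ‖u − û‖ ≤ ‖u − u_δ‖ + C₂·β. Then there exist constants (depending only on C₁, C₂, c, C) such that for all sufficiently small ξ: ‖r̂‖ is equivalent to ‖u − û‖ (efficiency and reliability), and ‖u − û‖ ≲ ‖u − u_δ‖ (quasi-optimality). -/
private lemma aux_real (C₁ C₂ c C : ℝ) (hC₁ : 0 < C₁) (hC₂ : 0 < C₂) (hc : 0 < c) (hC : 0 < C)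
    (ε β e a d rr rh : ℝ)
    (hε : 0 ≤ ε) (h1 : ε * C₁ ≤ 1/2) (h2 : ε * (C * C₂) ≤ 1/4) (h3 : ε * C₂ ≤ 1)
    (hβ : 0 ≤ β) (hrh : 0 ≤ rh) (he : 0 ≤ e)
    (F1 : |rr - rh| ≤ C₁ * β) (F2 : β ≤ ε * rh)
    (F3a : c * e ≤ rr) (F3b : rr ≤ C * e) (F4 : d ≤ C₂ * β)
    (F5a : e - d ≤ a) (F5b : a ≤ e + d) :
    (2*c/(3+2*c)) * a ≤ rh ∧ rh ≤ 4*C * a ∧ a ≤ 2 * e := by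
  obtain ⟨habs1, habs2⟩ := abs_le.mp F1
  have hC₁β : C₁ * β ≤ rh / 2 := by
    nlinarith [mul_le_mul_of_nonneg_left F2 hC₁.le, mul_le_mul_of_nonneg_right h1 hrh]
  have hCC₂β : C * C₂ * β ≤ rh / 4 := by
    nlinarith [mul_le_mul_of_nonneg_left F2 (mul_nonneg hC.le hC₂.le),
      mul_le_mul_of_nonneg_right h2 hrh]
  have hcC₂β : c * (C₂ * β) ≤ c * rh := by
    nlinarith [mul_le_mul_of_nonneg_left F2 (mul_nonneg hc.le hC₂.le),
      mul_le_mul_of_nonneg_right h3 (mul_nonneg hc.le hrh)]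
  have hrh2Ce : rh ≤ 2 * C * e := by linarith
  refine ⟨?_, ?_, ?_⟩
  · rw [div_mul_eq_mul_div, div_le_iff₀ (by positivity : (0:ℝ) < 3 + 2*c)]
    nlinarith [mul_le_mul_of_nonneg_left F5b hc.le, mul_le_mul_of_nonneg_left F4 hc.le]
  · nlinarith [mul_le_mul_of_nonneg_left F5a hC.le, mul_le_mul_of_nonneg_left F4 hC.le]
  · have h4 : C₂ * β ≤ e / 2 := by
      nlinarith [mul_le_mul_of_nonneg_left F2 hC₂.le,
        mul_le_mul_of_nonneg_left hrh2Ce (mul_nonneg hε hC₂.le),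
        mul_le_mul_of_nonneg_right h2 he]
    linarith

/-- abstract inequality structure of the inexact error-estimation lemma:
for sufficiently small `ξ`, the perturbed residual norm `‖rh‖` (= ‖r̂‖) is equivalent to
the error `‖u - û‖` (reliability and efficiency), and `û` is quasi-optimal. -/
theorem stmt2 {V X : Type*} [NormedAddCommGroup V] [NormedAddCommGroup X]
    (C₁ C₂ c C : ℝ) (hC₁ : 0 < C₁) (hC₂ : 0 < C₂) (hc : 0 < c) (hC : 0 < C) :
    ∃ ξ₀ k₁ k₂ k₃ : ℝ, 0 < ξ₀ ∧ 0 < k₁ ∧ 0 < k₂ ∧ 0 < k₃ ∧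
      ∀ (ξ β : ℝ) (r rh : V) (u uδ uh : X),
        0 < ξ → ξ < ξ₀ → ξ < 1 → 0 ≤ β →
        ‖r - rh‖ ≤ C₁ * β →
        β ≤ ξ / (1 - ξ) * ‖rh‖ →
        c * ‖u - uδ‖ ≤ ‖r‖ →
        ‖r‖ ≤ C * ‖u - uδ‖ →
        ‖uδ - uh‖ ≤ C₂ * β →
        (k₁ * ‖u - uh‖ ≤ ‖rh‖ ∧ ‖rh‖ ≤ k₂ * ‖u - uh‖ ∧ ‖u - uh‖ ≤ k₃ * ‖u - uδ‖) := by
  set δ : ℝ := min (1/(2*C₁)) (min (1/(4*(C*C₂))) (1/C₂)) with hδdef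
  have hδ : 0 < δ := by
    refine lt_min (by positivity) (lt_min (by positivity) (by positivity))
  refine ⟨δ/(1+δ), 2*c/(3+2*c), 4*C, 2, by positivity, by positivity, by positivity,
    by norm_num, ?_⟩
  intro ξ β r rh u uδ uh hξ0 hξδ hξ1 hβ hF1 hF2 hF3a hF3b hF4
  have h1ξ : 0 < 1 - ξ := by linarith
  set ε : ℝ := ξ / (1 - ξ) with hεdef
  have hε : 0 ≤ ε := by positivity
  have hεδ : ε ≤ δ := by
    rw [hεdef, div_le_iff₀ h1ξ]
    have := (lt_div_iff₀ (by positivity : (0:ℝ) < 1 + δ)).mp hξδ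
    nlinarith
  have h1 : ε * C₁ ≤ 1/2 := by
    have h := hεδ.trans (min_le_left _ _)
    rw [show (1:ℝ)/(2*C₁) = (1/2)/C₁ by rw [div_div]] at h
    exact (le_div_iff₀ hC₁).mp h
  have h2 : ε * (C * C₂) ≤ 1/4 := by
    have h := hεδ.trans ((min_le_right _ _).trans (min_le_left _ _))
    rw [show (1:ℝ)/(4*(C*C₂)) = (1/4)/(C*C₂) by rw [div_div]] at h
    exact (le_div_iff₀ (by positivity)).mp h
  have h3 : ε * C₂ ≤ 1 := by
    have h := hεδ.trans ((min_le_right _ _).trans (min_le_right _ _))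
    exact (le_div_iff₀ hC₂).mp h
  have F1 : |‖r‖ - ‖rh‖| ≤ C₁ * β := (abs_norm_sub_norm_le r rh).trans hF1
  have F5b : ‖u - uh‖ ≤ ‖u - uδ‖ + ‖uδ - uh‖ := norm_sub_le_norm_sub_add_norm_sub u uδ uh
  have F5a : ‖u - uδ‖ - ‖uδ - uh‖ ≤ ‖u - uh‖ := by
    have h := norm_sub_le_norm_sub_add_norm_sub u uh uδ
    rw [norm_sub_rev uh uδ] at h
    linarith
  exact aux_real C₁ C₂ c C hC₁ hC₂ hc hC ε β ‖u - uδ‖ ‖u - uh‖ ‖uδ - uh‖ ‖r‖ ‖rh‖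
    hε h1 h2 h3 hβ (norm_nonneg _) (norm_nonneg _) F1 hF2 hF3a hF3b hF4 F5a F5b
end

section
/- Let ‖r‖, ‖r̂‖, ‖r − r̂‖ be norms of vectors in a Hilbert space with ‖r − r̂‖ ≤ Cξ‖r̂‖ for some constant C > 0 and parameter ξ ∈ (0, 1/(2C)). If a subset J satisfies the Dörfler criterion ‖r̂|_J‖ ≥ θ‖r̂‖ for some θ ∈ (0,1], then ‖r|_J‖ ≥ θ̂‖r‖ for θ̂ := (θ(1 − Cξ/(1−Cξ)) − Cξ(1+θ))/(1 + Cξ/(1−Cξ)) whenever this quantity is positive; in particular, for ξ small enough (depending on θ and C), Dörfler marking for the perturbed residual r̂ implies Dörfler marking for the exact residual r with a parameter θ̂ > 0. -/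
/-!
With `δ = Cξ`, the triangle inequality gives `‖r‖ ≤ (1 + δ) ‖r̂‖` and
`‖r|_J‖ ≥ ‖r̂|_J‖ - ‖(r - r̂)|_J‖ ≥ (θ - δ) ‖r̂‖`, so `r` satisfies the Dörfler criterion with
parameter `(θ - δ) / (1 + δ)`, and for `δ ≤ 1/2` a positive `θ̂` is at most that. Positivity of
`θ̂` for small `ξ` is continuity of `θ̂` at `ξ = 0`, where it equals `θ`.
-/

noncomputable def doerflerThetaHat (C θ ξ : ℝ) : ℝ :=
  (θ * (1 - C * ξ / (1 - C * ξ)) - C * ξ * (1 + θ)) / (1 + C * ξ / (1 - C * ξ))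

theorem doerfler_of_perturbed_doerfler {E F : Type*} [SeminormedAddCommGroup E]
    [SeminormedAddCommGroup F] (P : E →+ F) (hP : ∀ x, ‖P x‖ ≤ ‖x‖) {r rh : E} {δ θ κ : ℝ}
    (hκ : 0 ≤ κ) (hκθ : κ * (1 + δ) ≤ θ - δ) (herr : ‖r - rh‖ ≤ δ * ‖rh‖)
    (hmark : θ * ‖rh‖ ≤ ‖P rh‖) :
    κ * ‖r‖ ≤ ‖P r‖ := by
  have hr : ‖r‖ ≤ (1 + δ) * ‖rh‖ := by linarith [norm_sub_norm_le r rh]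
  have hPr : (θ - δ) * ‖rh‖ ≤ ‖P r‖ := by
    have hPerr : ‖P rh‖ - ‖P r‖ ≤ ‖r - rh‖ := calc
      ‖P rh‖ - ‖P r‖ ≤ ‖P (rh - r)‖ := by rw [map_sub]; exact norm_sub_norm_le _ _
      _ ≤ ‖r - rh‖ := norm_sub_rev rh r ▸ hP _
    linarith
  calc κ * ‖r‖ ≤ κ * (1 + δ) * ‖rh‖ := by rw [mul_assoc]; gcongr
    _ ≤ (θ - δ) * ‖rh‖ := by gcongr
    _ ≤ ‖P r‖ := hPr

namespace lp

variable {α E : Type*} [NormedAddCommGroup E] {p : ENNReal}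

theorem norm_eq_sqrt_tsum_norm_sq {F : α → Type*} [∀ i, NormedAddCommGroup (F i)]
    (f : lp F 2) : ‖f‖ = √(∑' i, ‖f i‖ ^ 2) := by
  rw [norm_eq_tsum_rpow (by norm_num), Real.sqrt_eq_rpow]
  norm_num

noncomputable def indicator (s : Set α) : lp (fun _ : α => E) p →+ lp (fun _ : α => E) p where
  toFun f := ⟨s.indicator ⇑f, (lp.memℓp f).mono' (norm_indicator_le_norm_self f)⟩
  map_zero' := by ext1; exact s.indicator_zero E
  map_add' f g := by ext1; exact s.indicator_add ⇑f ⇑g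

@[simp]
theorem coe_indicator (s : Set α) (f : lp (fun _ : α => E) p) :
    ⇑(indicator s f) = s.indicator f :=
  rfl

theorem norm_indicator_le (hp : p ≠ 0) (s : Set α) (f : lp (fun _ : α => E) p) :
    ‖indicator s f‖ ≤ ‖f‖ :=
  lp.norm_mono hp (norm_indicator_le_norm_self f)

theorem sqrt_tsum_sq_eq_norm {f : α → ℝ} (hf : Memℓp f 2) :
    √(∑' i, f i ^ 2) = ‖(⟨f, hf⟩ : lp (fun _ : α => ℝ) 2)‖ := by
  simp [norm_eq_sqrt_tsum_norm_sq]

theorem sqrt_tsum_subtype_sq_eq_norm_indicator {f : α → ℝ} (hf : Memℓp f 2) (s : Set α) :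
    √(∑' i : s, f i ^ 2) = ‖indicator s (⟨f, hf⟩ : lp (fun _ : α => ℝ) 2)‖ := by
  classical
  rw [norm_eq_sqrt_tsum_norm_sq, tsum_subtype s (fun i => f i ^ 2)]
  congr 1
  refine tsum_congr fun i => ?_
  by_cases hi : i ∈ s <;> simp [hi]

end lp

theorem doerflerThetaHat_eq {C θ ξ : ℝ} (h : C * ξ ≠ 1) :
    doerflerThetaHat C θ ξ = θ * (1 - 2 * (C * ξ)) - C * ξ * (1 + θ) * (1 - C * ξ) := by
  have h1 : 1 - C * ξ ≠ 0 := sub_ne_zero.mpr (Ne.symm h)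
  have h2 : 1 + C * ξ / (1 - C * ξ) = 1 / (1 - C * ξ) := by field_simp; ring
  rw [doerflerThetaHat, h2]
  field_simp
  ring

theorem doerflerThetaHat_mul_le {C θ ξ : ℝ} (hθ : 0 ≤ θ) (hδ₀ : 0 ≤ C * ξ)
    (hδ : C * ξ ≤ 1 / 2) (hpos : 0 < doerflerThetaHat C θ ξ) :
    doerflerThetaHat C θ ξ * (1 + C * ξ) ≤ θ - C * ξ := by
  rw [doerflerThetaHat_eq (by linarith)] at hpos ⊢
  set δ := C * ξ
  have hδθ : δ < θ := by
    by_contra! hθδ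
    nlinarith [mul_le_mul_of_nonneg_right hθδ (by linarith : (0 : ℝ) ≤ 1 - 2 * δ),
      mul_nonneg (mul_nonneg hδ₀ hθ) (by linarith : (0 : ℝ) ≤ 1 - δ)]
  nlinarith [mul_nonneg hδ₀ hθ, mul_nonneg (mul_nonneg hδ₀ hδ₀) (by linarith : (0 : ℝ) ≤ θ - δ),
    mul_nonneg (mul_nonneg (mul_nonneg hδ₀ hδ₀) hθ) (by linarith : (0 : ℝ) ≤ 1 - δ)]

theorem exists_pos_forall_doerflerThetaHat_pos (C : ℝ) {θ : ℝ} (hθ : 0 < θ) :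
    ∃ ξ₀ : ℝ, 0 < ξ₀ ∧ ∀ ξ : ℝ, 0 < ξ → ξ < ξ₀ → 0 < doerflerThetaHat C θ ξ := by
  have hcont : ContinuousAt (doerflerThetaHat C θ) 0 := by
    unfold doerflerThetaHat
    fun_prop (disch := simp)
  have hθ' : 0 < doerflerThetaHat C θ 0 := by simpa [doerflerThetaHat] using hθ
  obtain ⟨ε, hε, hball⟩ := Metric.eventually_nhds_iff.mp (hcont.eventually (lt_mem_nhds hθ'))
  refine ⟨ε, hε, fun ξ hξ hξε => hball ?_⟩
  rwa [Real.dist_0_eq_abs, abs_of_pos hξ]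

theorem stmt3_general {Λ : Type*} (C θ : ℝ) (hC : 0 < C)
    (hθ0 : 0 < θ) :
    (∀ (ξ : ℝ) (r rh : Λ → ℝ) (J : Set Λ),
      0 < ξ → ξ < 1 / (2 * C) →
      Memℓp r 2 → Memℓp rh 2 →
      Real.sqrt (∑' i, (r i - rh i) ^ 2) ≤ C * ξ * Real.sqrt (∑' i, (rh i) ^ 2) →
      θ * Real.sqrt (∑' i, (rh i) ^ 2) ≤ Real.sqrt (∑' i : J, (rh (i : Λ)) ^ 2) →
      0 < doerflerThetaHat C θ ξ →
      doerflerThetaHat C θ ξ * Real.sqrt (∑' i, (r i) ^ 2)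
        ≤ Real.sqrt (∑' i : J, (r (i : Λ)) ^ 2)) ∧
    (∃ ξ₀ : ℝ, 0 < ξ₀ ∧ ∀ ξ : ℝ, 0 < ξ → ξ < ξ₀ → 0 < doerflerThetaHat C θ ξ) := by
  refine ⟨fun ξ r rh J hξ hξC hr hrh herr hmark hpos => ?_,
    exists_pos_forall_doerflerThetaHat_pos C hθ0⟩
  have hδ : C * ξ ≤ 1 / 2 := by
    rw [lt_div_iff₀ (by positivity)] at hξC
    linarith
  set R : lp (fun _ : Λ => ℝ) 2 := ⟨r, hr⟩
  set Rh : lp (fun _ : Λ => ℝ) 2 := ⟨rh, hrh⟩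
  have hsub : √(∑' i, (r i - rh i) ^ 2) = ‖R - Rh‖ := by
    simp only [lp.norm_eq_sqrt_tsum_norm_sq, lp.coeFn_sub, Pi.sub_apply, Real.norm_eq_abs, sq_abs,
      R, Rh]
  rw [hsub, lp.sqrt_tsum_sq_eq_norm hrh] at herr
  rw [lp.sqrt_tsum_sq_eq_norm hrh, lp.sqrt_tsum_subtype_sq_eq_norm_indicator hrh] at hmark
  rw [lp.sqrt_tsum_sq_eq_norm hr, lp.sqrt_tsum_subtype_sq_eq_norm_indicator hr]
  exact doerfler_of_perturbed_doerfler (lp.indicator J) (lp.norm_indicator_le two_ne_zero J)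
    hpos.le (doerflerThetaHat_mul_le hθ0.le (mul_pos hC hξ).le hδ hpos) herr hmark

/-- Dörfler marking for the perturbed residual `rh = r̂` implies Dörfler
marking for the exact residual `r` with parameter `θ̂`, which is positive for `ξ` small
enough. Norms are ℓ₂-norms over a countable index set, `r|_J` is restriction to `J`. -/
theorem stmt3 {Λ : Type*} [Countable Λ] (C θ : ℝ) (hC : 0 < C)
    (hθ0 : 0 < θ) (hθ1 : θ ≤ 1) :
    (∀ (ξ : ℝ) (r rh : Λ → ℝ) (J : Set Λ),
      0 < ξ → ξ < 1 / (2 * C) →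
      Memℓp r 2 → Memℓp rh 2 →
      Real.sqrt (∑' i, (r i - rh i) ^ 2) ≤ C * ξ * Real.sqrt (∑' i, (rh i) ^ 2) →
      θ * Real.sqrt (∑' i, (rh i) ^ 2) ≤ Real.sqrt (∑' i : J, (rh (i : Λ)) ^ 2) →
      0 < doerflerThetaHat C θ ξ →
      doerflerThetaHat C θ ξ * Real.sqrt (∑' i, (r i) ^ 2)
        ≤ Real.sqrt (∑' i : J, (r (i : Λ)) ^ 2)) ∧
    (∃ ξ₀ : ℝ, 0 < ξ₀ ∧ ∀ ξ : ℝ, 0 < ξ → ξ < ξ₀ → 0 < doerflerThetaHat C θ ξ) :=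
  stmt3_general C θ hC hθ0
end

section
/- Let Λ̆ ⊆ ∨̆⁰ × ∨̆¹ and Λ ⊆ ∨⁰ × ∨¹ be finite double-trees, and suppose each index λ carries a neighbourhood S(λ) with S(λ) ⊆ ∪_{μ parent of λ} S(μ) for |λ| > 0, and that for every μ ∈ ∨̆⁰ the number of λ ∈ ∨⁰ with |μ| = |λ| + 1 and |S̆⁰(μ) ∩ S⁰(λ)| > 0 is bounded by a constant K. Define Σ := ∪_{λ ∈ P₀Λ} ({λ} × ∪_{μ ∈ P₀Λ̆ : |μ|=|λ|+1, |S̆⁰(μ)∩S⁰(λ)|>0} Λ̆_{1,μ}). Then Σ is a double-tree and #Σ ≤ K · #Λ̆. -/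
/-- A tree in a graded forest: a finite subset closed under taking parents
(`par x y` means `x` is a parent of `y`). -/
def IsTree {V : Type*} (par : V → V → Prop) (T : Set V) : Prop :=
  T.Finite ∧ ∀ y ∈ T, ∀ x, par x y → x ∈ T

/-- A double-tree: a finite subset of a product of two graded index sets all of whose
fibers in each coordinate are trees. -/
def IsDoubleTree {V0 V1 : Type*} (p0 : V0 → V0 → Prop) (p1 : V1 → V1 → Prop)
    (L : Set (V0 × V1)) : Prop :=
  L.Finite ∧ (∀ b : V1, IsTree p0 {a : V0 | (a, b) ∈ L}) ∧
    (∀ a : V0, IsTree p1 {b : V1 | (a, b) ∈ L})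

/-- for finite double-trees `L ⊆ ∨⁰ × ∨¹` and `L' ⊆ ∨̆⁰ × ∨̆¹` (primed
objects carry a breve in the paper), with level-decreasing neighbourhoods `S`, `S'`
(ancestors' neighbourhoods contain descendants') and the overlap-counting bound `K`,
the set `Σ := ∪_{λ ∈ P₀L} {λ} × ∪_{μ ∈ P₀L' : |μ|=|λ|+1, ν(S'(μ)∩S(λ))>0} L'_{1,μ}`
is a double-tree with `#Σ ≤ K · #L'`. -/
theorem stmt11 {V0 V1 W0 W1 Ω : Type*} [MeasurableSpace Ω] (ν : MeasureTheory.Measure Ω)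
    (p0 : V0 → V0 → Prop) (p1 : V1 → V1 → Prop)
    (q0 : W0 → W0 → Prop) (q1 : W1 → W1 → Prop)
    (lev : V0 → ℕ) (lev' : W0 → ℕ)
    (S : V0 → Set Ω) (S' : W0 → Set Ω) (K : ℕ)
    (hgrade : ∀ x y, p0 x y → lev x + 1 = lev y)
    (hgrade' : ∀ x y, q0 x y → lev' x + 1 = lev' y)
    (hroot' : ∀ y : W0, 0 < lev' y → ∃ x, q0 x y)
    (hS : ∀ x y, p0 x y → S y ⊆ S x)
    (hS' : ∀ x y, q0 x y → S' y ⊆ S' x)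
    (hK : ∀ μ : W0,
      ({a : V0 | lev' μ = lev a + 1 ∧ 0 < ν (S' μ ∩ S a)}).Finite ∧
      ({a : V0 | lev' μ = lev a + 1 ∧ 0 < ν (S' μ ∩ S a)}).ncard ≤ K)
    (L : Set (V0 × V1)) (L' : Set (W0 × W1))
    (hL : IsDoubleTree p0 p1 L) (hL' : IsDoubleTree q0 q1 L')
    (Sig : Set (V0 × W1))
    (hSig : Sig = {z : V0 × W1 | z.1 ∈ Prod.fst '' L ∧
      ∃ μ : W0, μ ∈ Prod.fst '' L' ∧ lev' μ = lev z.1 + 1 ∧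
        0 < ν (S' μ ∩ S z.1) ∧ (μ, z.2) ∈ L'}) :
    IsDoubleTree p0 q1 Sig ∧ Sig.ncard ≤ K * L'.ncard := by
  classical
  obtain ⟨hLfin, hL0, hL1⟩ := hL
  obtain ⟨hL'fin, hL'0, hL'1⟩ := hL'
  have hSigSub : Sig ⊆ (Prod.fst '' L) ×ˢ (Prod.snd '' L') := by
    rw [hSig]
    rintro ⟨a, b⟩ ⟨ha, μ, hμ, _, _, hμb⟩
    exact ⟨ha, ⟨(μ, b), hμb, rfl⟩⟩
  have hSigFin : Sig.Finite :=
    ((hLfin.image _).prod (hL'fin.image _)).subset hSigSub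
  refine ⟨⟨hSigFin, ?_, ?_⟩, ?_⟩
  · -- fibers over W1 are p0-trees
    intro b
    refine ⟨?_, ?_⟩
    · have : {a : V0 | (a, b) ∈ Sig} = (fun a => (a, b)) ⁻¹' Sig := rfl
      rw [this]
      exact hSigFin.preimage (fun x _ y _ h => congrArg Prod.fst h)
    · intro y hy x hxy
      rw [hSig] at hy ⊢
      obtain ⟨⟨⟨y', b'⟩, hyL, hy'⟩, μ, ⟨⟨μ', b''⟩, hμL', hμ'⟩, hlev, hpos, hμb⟩ := hy
      simp only at hy' hμ'
      subst hy'; subst hμ'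
      have hx : (x, b') ∈ L := (hL0 b').2 y' hyL x hxy
      have hlevx : lev x + 1 = lev y' := hgrade x y' hxy
      have hμpos : 0 < lev' μ' := by omega
      obtain ⟨μ'', hμ''⟩ := hroot' μ' hμpos
      have hμ''L : (μ'', b) ∈ L' := (hL'0 b).2 μ' hμb μ'' hμ''
      refine ⟨⟨(x, b'), hx, rfl⟩, μ'', ⟨(μ'', b), hμ''L, rfl⟩, ?_, ?_, hμ''L⟩
      · have h3 := hgrade' μ'' μ' hμ''
        show lev' μ'' = lev x + 1
        simp only at hlev
        omega
      · refine lt_of_lt_of_le hpos (MeasureTheory.measure_mono ?_)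
        exact Set.inter_subset_inter (hS' μ'' μ' hμ'') (hS x y' hxy)
  · -- fibers over V0 are q1-trees
    intro a
    refine ⟨?_, ?_⟩
    · have : {b : W1 | (a, b) ∈ Sig} = (fun b => (a, b)) ⁻¹' Sig := rfl
      rw [this]
      exact hSigFin.preimage (fun x _ y _ h => congrArg Prod.snd h)
    · intro y hy x hxy
      rw [hSig] at hy ⊢
      obtain ⟨ha, μ, hμ, hlev, hpos, hμy⟩ := hy
      exact ⟨ha, μ, hμ, hlev, hpos, (hL'1 μ).2 y hμy x hxy⟩
  · -- cardinality bound
    set F := hSigFin.toFinset with hF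
    set L'f := hL'fin.toFinset with hL'f
    set M := L'f.image Prod.fst with hM
    have hcover : F ⊆ M.biUnion (fun μ =>
        (hK μ).1.toFinset ×ˢ ((L'f.filter (fun z => z.1 = μ)).image Prod.snd)) := by
      intro z hz
      have hzS : z ∈ Sig := hSigFin.mem_toFinset.mp hz
      rw [hSig] at hzS
      obtain ⟨ha, μ, hμ, hlev, hpos, hμb⟩ := hzS
      refine Finset.mem_biUnion.mpr ⟨μ, ?_, ?_⟩
      · exact Finset.mem_image.mpr ⟨(μ, z.2), hL'fin.mem_toFinset.mpr hμb, rfl⟩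
      · refine Finset.mem_product.mpr ⟨?_, ?_⟩
        · exact (hK μ).1.mem_toFinset.mpr ⟨hlev, hpos⟩
        · exact Finset.mem_image.mpr ⟨(μ, z.2),
            Finset.mem_filter.mpr ⟨hL'fin.mem_toFinset.mpr hμb, rfl⟩, rfl⟩
    have h1 : Sig.ncard = F.card := Set.ncard_eq_toFinset_card Sig hSigFin
    have h2 : L'.ncard = L'f.card := Set.ncard_eq_toFinset_card L' hL'fin
    calc Sig.ncard = F.card := h1
      _ ≤ (M.biUnion (fun μ =>
        (hK μ).1.toFinset ×ˢ ((L'f.filter (fun z => z.1 = μ)).image Prod.snd))).card :=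
          Finset.card_le_card hcover
      _ ≤ ∑ μ ∈ M, ((hK μ).1.toFinset ×ˢ
            ((L'f.filter (fun z => z.1 = μ)).image Prod.snd)).card :=
          Finset.card_biUnion_le
      _ ≤ ∑ μ ∈ M, K * (L'f.filter (fun z => z.1 = μ)).card := by
          refine Finset.sum_le_sum fun μ _ => ?_
          rw [Finset.card_product]
          have hA : (hK μ).1.toFinset.card ≤ K := by
            rw [← Set.ncard_eq_toFinset_card _ (hK μ).1]
            exact (hK μ).2
          exact Nat.mul_le_mul hA Finset.card_image_le
      _ = K * ∑ μ ∈ M, (L'f.filter (fun z => z.1 = μ)).card := by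
          rw [Finset.mul_sum]
      _ = K * L'f.card := by
          rw [← Finset.card_eq_sum_card_image Prod.fst L'f]
      _ = K * L'.ncard := by rw [h2]
end

section
/- Let H₁ ⊂ H₀ be Hilbert spaces and suppose {e_j} is a collection in H₁ such that for a closed subspace W ⊂ H₁ and finite coefficient vectors d: ‖v + Σ_j d_j e_j‖²_{H₁} ≂ ‖v‖²_{H₁} + Σ_j |d_j|² and ‖v + Σ_j d_j e_j‖²_{H₀'} ≂ ‖v‖²_{H₀'} + Σ_j 4^{-g_j}|d_j|² for all v ∈ W, where g_j ≥ 0 and H₀' denotes a weaker norm. Then the rescaled functions θ_j := e_j/√(1 + 4^{ℓ − g_j}) satisfy, for the interpolation-type norm ‖w‖²_{X,ℓ} := ‖w‖²_{H₁} + 4^ℓ‖w‖²_{H₀'}, the stability ‖v + Σ_j c_j θ_j‖²_{X,ℓ} ≂ ‖v‖²_{X,ℓ} + Σ_j |c_j|² for all v ∈ W and finite vectors c, with constants independent of ℓ. -/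
/-- two-level stability. If the complement family `e j` is stable for the
`H₁`-type norm `N1` (with weights `1`) and for the `H₀'`-type norm `N0` (with weights
`4^{-g j}`), then the rescaled functions `θ_j := e_j / sqrt(1 + 4^{ℓ - g j})` are
uniformly stable for the interpolation norm `‖w‖²_{X,ℓ} = N1(w)² + 4^ℓ N0(w)²`,
with constants independent of `ℓ`. -/
theorem stmt14 {V : Type*} [AddCommGroup V] [Module ℝ V] {ι : Type*}
    (N1 N0 : V → ℝ) (W : Submodule ℝ V) (e : ι → V) (g : ι → ℕ)
    (c1 C1 c0 C0 : ℝ) (hc1 : 0 < c1) (hC1 : 0 < C1) (hc0 : 0 < c0) (hC0 : 0 < C0)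
    (h1 : ∀ v ∈ W, ∀ (s : Finset ι) (d : ι → ℝ),
      c1 * ((N1 v) ^ 2 + ∑ j ∈ s, (d j) ^ 2)
          ≤ (N1 (v + ∑ j ∈ s, d j • e j)) ^ 2 ∧
      (N1 (v + ∑ j ∈ s, d j • e j)) ^ 2
          ≤ C1 * ((N1 v) ^ 2 + ∑ j ∈ s, (d j) ^ 2))
    (h0 : ∀ v ∈ W, ∀ (s : Finset ι) (d : ι → ℝ),
      c0 * ((N0 v) ^ 2 + ∑ j ∈ s, (4 : ℝ) ^ (-(g j : ℤ)) * (d j) ^ 2)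
          ≤ (N0 (v + ∑ j ∈ s, d j • e j)) ^ 2 ∧
      (N0 (v + ∑ j ∈ s, d j • e j)) ^ 2
          ≤ C0 * ((N0 v) ^ 2 + ∑ j ∈ s, (4 : ℝ) ^ (-(g j : ℤ)) * (d j) ^ 2)) :
    ∃ c C : ℝ, 0 < c ∧ 0 < C ∧
      ∀ (ℓ : ℕ), ∀ v ∈ W, ∀ (s : Finset ι) (cc : ι → ℝ),
        c * ((N1 v) ^ 2 + (4 : ℝ) ^ ℓ * (N0 v) ^ 2 + ∑ j ∈ s, (cc j) ^ 2)
            ≤ (N1 (v + ∑ j ∈ s,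
                  (cc j / Real.sqrt (1 + (4 : ℝ) ^ ((ℓ : ℤ) - (g j : ℤ)))) • e j)) ^ 2
              + (4 : ℝ) ^ ℓ * (N0 (v + ∑ j ∈ s,
                  (cc j / Real.sqrt (1 + (4 : ℝ) ^ ((ℓ : ℤ) - (g j : ℤ)))) • e j)) ^ 2 ∧
        (N1 (v + ∑ j ∈ s,
              (cc j / Real.sqrt (1 + (4 : ℝ) ^ ((ℓ : ℤ) - (g j : ℤ)))) • e j)) ^ 2
          + (4 : ℝ) ^ ℓ * (N0 (v + ∑ j ∈ s,
              (cc j / Real.sqrt (1 + (4 : ℝ) ^ ((ℓ : ℤ) - (g j : ℤ)))) • e j)) ^ 2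
            ≤ C * ((N1 v) ^ 2 + (4 : ℝ) ^ ℓ * (N0 v) ^ 2 + ∑ j ∈ s, (cc j) ^ 2) := by
  refine ⟨min c1 c0, max C1 C0, lt_min hc1 hc0, lt_of_lt_of_le hC1 (le_max_left _ _), ?_⟩
  intro ℓ v hv s cc
  obtain ⟨h1l, h1u⟩ := h1 v hv s (fun j => cc j / Real.sqrt (1 + (4 : ℝ) ^ ((ℓ : ℤ) - (g j : ℤ))))
  obtain ⟨h0l, h0u⟩ := h0 v hv s (fun j => cc j / Real.sqrt (1 + (4 : ℝ) ^ ((ℓ : ℤ) - (g j : ℤ))))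
  beta_reduce at h1l h1u h0l h0u
  have hpow : ∀ j : ι, (0:ℝ) < 1 + (4:ℝ) ^ ((ℓ:ℤ) - (g j : ℤ)) := fun j => by positivity
  have key : (∑ j ∈ s, (cc j / Real.sqrt (1 + (4:ℝ) ^ ((ℓ:ℤ) - (g j : ℤ)))) ^ 2)
      + (4:ℝ) ^ ℓ * ∑ j ∈ s, (4:ℝ) ^ (-(g j : ℤ)) *
          (cc j / Real.sqrt (1 + (4:ℝ) ^ ((ℓ:ℤ) - (g j : ℤ)))) ^ 2
      = ∑ j ∈ s, (cc j) ^ 2 := by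
    rw [Finset.mul_sum, ← Finset.sum_add_distrib]
    refine Finset.sum_congr rfl fun j _ => ?_
    have hP := hpow j
    have h4 : (4:ℝ) ^ (ℓ:ℕ) * (4:ℝ) ^ (-(g j : ℤ)) = (4:ℝ) ^ ((ℓ:ℤ) - (g j : ℤ)) := by
      rw [← zpow_natCast (4:ℝ) ℓ, ← zpow_add₀ (by norm_num : (4:ℝ) ≠ 0)]
      ring_nf
    have hs : Real.sqrt (1 + (4:ℝ) ^ ((ℓ:ℤ) - (g j : ℤ))) ^ 2
        = 1 + (4:ℝ) ^ ((ℓ:ℤ) - (g j : ℤ)) := Real.sq_sqrt hP.le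
    have hdj : (cc j / Real.sqrt (1 + (4:ℝ) ^ ((ℓ:ℤ) - (g j : ℤ)))) ^ 2
        = (cc j) ^ 2 / (1 + (4:ℝ) ^ ((ℓ:ℤ) - (g j : ℤ))) := by
      rw [div_pow, hs]
    rw [hdj, ← mul_assoc, h4]
    field_simp
  have hsum1 : (0:ℝ) ≤ ∑ j ∈ s, (cc j / Real.sqrt (1 + (4:ℝ) ^ ((ℓ:ℤ) - (g j : ℤ)))) ^ 2 :=
    Finset.sum_nonneg fun j _ => sq_nonneg _
  have hsum0 : (0:ℝ) ≤ ∑ j ∈ s, (4:ℝ) ^ (-(g j : ℤ)) *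
      (cc j / Real.sqrt (1 + (4:ℝ) ^ ((ℓ:ℤ) - (g j : ℤ)))) ^ 2 :=
    Finset.sum_nonneg fun j _ => mul_nonneg (by positivity) (sq_nonneg _)
  have h4l : (0:ℝ) < (4:ℝ) ^ ℓ := by positivity
  have hmin1 : min c1 c0 ≤ c1 := min_le_left _ _
  have hmin0 : min c1 c0 ≤ c0 := min_le_right _ _
  have hmax1 : C1 ≤ max C1 C0 := le_max_left _ _
  have hmax0 : C0 ≤ max C1 C0 := le_max_right _ _
  rw [← key]
  constructor
  · nlinarith [mul_le_mul_of_nonneg_left h0l h4l.le,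
      mul_le_mul_of_nonneg_right hmin1 (sq_nonneg (N1 v)),
      mul_le_mul_of_nonneg_right hmin1 hsum1,
      mul_le_mul_of_nonneg_right hmin0 (mul_nonneg h4l.le (sq_nonneg (N0 v))),
      mul_le_mul_of_nonneg_right hmin0 (mul_nonneg h4l.le hsum0), h1l]
  · nlinarith [mul_le_mul_of_nonneg_left h0u h4l.le,
      mul_le_mul_of_nonneg_right hmax1 (sq_nonneg (N1 v)),
      mul_le_mul_of_nonneg_right hmax1 hsum1,
      mul_le_mul_of_nonneg_right hmax0 (mul_nonneg h4l.le (sq_nonneg (N0 v))),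
      mul_le_mul_of_nonneg_right hmax0 (mul_nonneg h4l.le hsum0), h1u]
end
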